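/- Suppose x, y in (0,1) and normalized confusion matrices for two groups satisfy demographic parity (TPa+FPa = TPb+FPb), predictive parity (TPa·FPb = TPb·FPa), and the nondegeneracy condition FPb + TPb > 0. Then TPa = TPb and FPa = FPb. -/
import Mathlib


theorem stmt
    (x y TPa FNa TNa FPa TPb FNb TNb FPb : ℝ)
    (hx0 : 0 < x) (hx1 : x < 1) (hy0 : 0 < y) (hy1 : y < 1)
    (hTPa : 0 ≤ TPa) (hFNa : 0 ≤ FNa) (hTNa : 0 ≤ TNa) (hFPa : 0 ≤ FPa)
    (hTPb : 0 ≤ TPb) (hFNb : 0 ≤ FNb) (hTNb : 0 ≤ TNb) (hFPb : 0 ≤ FPb)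
    (hra : TPa + FNa = 1 - x) (hra' : TNa + FPa = x)
    (hrb : TPb + FNb = 1 - y) (hrb' : TNb + FPb = y)
    (hdp : TPa + FPa = TPb + FPb)
    (hpp : TPa * FPb = TPb * FPa)
    (hnd : 0 < FPb + TPb)
    : TPa = TPb ∧ FPa = FPb := by
  have key : TPa * (FPb + TPb) = TPb * (FPb + TPb) := by nlinarith [hpp, hdp]
  have h1 : TPa = TPb := mul_right_cancel₀ (ne_of_gt hnd) key
  exact ⟨h1, by linarith⟩
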